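/- arXiv:2604.01006 — 6 statements merged into one kernel-verified Lean document; each statement's English description precedes it below -/
import Mathlib

section
/- Let c ∈ R^d, α > 0, and u ∈ {-1,0,+1}^d be nonzero. For any point x ∈ R^d and any pyramid P^s_i(c): (1) if x ∈ P^s_i(c) but x ∉ P^s_i(c + αu), then s·u_i ≥ 0; (2) if x ∉ P^s_i(c) but x ∈ P^s_i(c + αu), then s·u_i ≤ 0. -/
/-- The `s`-pyramid in direction `i` around `c` (ℓ∞-norm). -/
def Pyr {d : ℕ} (s : ℝ) (i : Fin d) (c : Fin d → ℝ) : Set (Fin d → ℝ) :=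
  {y | s * (y i - c i) = ‖y - c‖}

lemma pyr_key {d : ℕ} (x : Fin d → ℝ) (i : Fin d) (s : ℝ) (hs : |s| = 1)
    (c c' : Fin d → ℝ) (α : ℝ)
    (h1 : s * (x i - c' i) = s * (x i - c i) + α)
    (h2 : ‖c - c'‖ ≤ α)
    (hx : x ∈ Pyr s i c) : x ∈ Pyr s i c' := by
  have hb : s * (x i - c' i) ≤ ‖x - c'‖ := by
    calc s * (x i - c' i) ≤ |s * (x i - c' i)| := le_abs_self _
      _ = |x i - c' i| := by rw [abs_mul, hs, one_mul]
      _ ≤ ‖x - c'‖ := by simpa using norm_le_pi_norm (x - c') i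
  have ht : ‖x - c'‖ ≤ ‖x - c‖ + α := by
    have he : x - c' = (x - c) + (c - c') := by abel
    calc ‖x - c'‖ = ‖(x - c) + (c - c')‖ := by rw [← he]
      _ ≤ ‖x - c‖ + ‖c - c'‖ := norm_add_le _ _
      _ ≤ ‖x - c‖ + α := by linarith
  have hx' : s * (x i - c i) = ‖x - c‖ := hx
  show s * (x i - c' i) = ‖x - c'‖
  linarith

theorem pulling_gain_loss {d : ℕ} (c : Fin d → ℝ) (α : ℝ) (hα : 0 < α)
    (u : Fin d → ℝ) (hu : ∀ j, u j = -1 ∨ u j = 0 ∨ u j = 1) (hu0 : u ≠ 0)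
    (x : Fin d → ℝ) (i : Fin d) (s : ℝ) (hs : s = 1 ∨ s = -1) :
    (x ∈ Pyr s i c → x ∉ Pyr s i (c + α • u) → 0 ≤ s * u i) ∧
    (x ∉ Pyr s i c → x ∈ Pyr s i (c + α • u) → s * u i ≤ 0) := by
  have habs : |s| = 1 := by rcases hs with h | h <;> simp [h]
  have hun : ‖u‖ ≤ 1 := by
    rw [pi_norm_le_iff_of_nonneg zero_le_one]
    intro j
    rcases hu j with h | h | h <;> simp [h]
  have hnorm1 : ‖c - (c + α • u)‖ ≤ α := by
    have he : c - (c + α • u) = -(α • u) := by abel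
    rw [he, norm_neg, norm_smul, Real.norm_eq_abs, abs_of_pos hα]
    nlinarith
  have hnorm2 : ‖(c + α • u) - c‖ ≤ α := by
    rw [← norm_neg]
    have he : -((c + α • u) - c) = c - (c + α • u) := by abel
    rw [he]; exact hnorm1
  have happ : (c + α • u) i = c i + α * u i := by simp
  have hsu3 : s * u i = -1 ∨ s * u i = 0 ∨ s * u i = 1 := by
    rcases hs with h | h <;> rcases hu i with h' | h' | h' <;> simp [h, h']
  constructor
  · intro hx hx'
    by_contra hneg
    push_neg at hneg
    have hsu : s * u i = -1 := by rcases hsu3 with h | h | h <;> linarith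
    apply hx'
    apply pyr_key x i s habs c _ α _ hnorm1 hx
    rw [happ]
    linear_combination (-α) * hsu
  · intro hx hx'
    by_contra hneg
    push_neg at hneg
    have hsu : s * u i = 1 := by rcases hsu3 with h | h | h <;> linarith
    apply hx
    apply pyr_key x i s habs (c + α • u) c α _ hnorm2 hx'
    rw [happ]
    linear_combination α * hsu
end

section
/- Let c ∈ R^d, α > 0, and u ∈ {-1,0,+1}^d be nonzero. If x ∉ P^s_i(c) but x ∈ P^s_i(c + αu) and u_i = 0, then there exist j ∈ [d] and s' ∈ {-1,+1} with x ∈ P^{s'}_j(c) and s'·u_j > 0. -/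
theorem pulling_zero_coordinate {d : ℕ} (c : Fin d → ℝ) (α : ℝ) (hα : 0 < α)
    (u : Fin d → ℝ) (hu : ∀ j, u j = -1 ∨ u j = 0 ∨ u j = 1) (hu0 : u ≠ 0)
    (x : Fin d → ℝ) (i : Fin d) (s : ℝ) (hs : s = 1 ∨ s = -1)
    (hxi : x ∉ Pyr s i c) (hxi' : x ∈ Pyr s i (c + α • u)) (hui : u i = 0) :
    ∃ (j : Fin d) (s' : ℝ), (s' = 1 ∨ s' = -1) ∧ x ∈ Pyr s' j c ∧ 0 < s' * u j := by
  have : Nonempty (Fin d) := ⟨i⟩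
  obtain ⟨j, hj⟩ := Finite.exists_max (fun k : Fin d => |x k - c k|)
  have hN : ‖x - c‖ = |x j - c j| := by
    refine le_antisymm ?_ ?_
    · rw [pi_norm_le_iff_of_nonneg (abs_nonneg _)]
      intro k
      simpa [Real.norm_eq_abs] using hj k
    · simpa [Real.norm_eq_abs] using norm_le_pi_norm (x - c) j
  have hM : s * (x i - c i) = ‖x - c - α • u‖ := by
    have h := hxi'
    simp only [Pyr, Set.mem_setOf_eq, Pi.add_apply, Pi.smul_apply, smul_eq_mul, hui,
      mul_zero, add_zero, sub_add_eq_sub_sub] at h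
    exact h
  have hle : s * (x i - c i) ≤ |x i - c i| := by
    rcases hs with h | h <;> rcases abs_cases (x i - c i) with ⟨h1, h2⟩ | ⟨h1, h2⟩ <;> nlinarith
  have hne : s * (x i - c i) ≠ ‖x - c‖ := by
    simpa [Pyr] using hxi
  have hlt : ‖x - c - α • u‖ < ‖x - c‖ := by
    have h2 : s * (x i - c i) ≤ ‖x - c‖ := hN ▸ le_trans hle (hj i)
    rw [← hM]
    exact lt_of_le_of_ne h2 hne
  have hjle : |x j - c j - α * u j| ≤ ‖x - c - α • u‖ := by
    simpa [Real.norm_eq_abs] using norm_le_pi_norm (x - c - α • u) j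
  have hkey : |x j - c j - α * u j| < |x j - c j| := lt_of_le_of_lt hjle (hN ▸ hlt)
  rcases hu j with h1 | h1 | h1
  · have hneg : x j - c j < 0 := by
      rw [h1] at hkey
      rcases abs_cases (x j - c j - α * (-1)) with ⟨a1, a2⟩ | ⟨a1, a2⟩ <;>
        rcases abs_cases (x j - c j) with ⟨b1, b2⟩ | ⟨b1, b2⟩ <;> nlinarith
    refine ⟨j, -1, Or.inr rfl, ?_, ?_⟩
    · show (-1 : ℝ) * (x j - c j) = ‖x - c‖
      rw [hN, abs_of_neg hneg]; ring
    · rw [h1]; norm_num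
  · rw [h1, mul_zero, sub_zero] at hkey
    exact absurd hkey (lt_irrefl _)
  · have hpos : 0 < x j - c j := by
      rw [h1] at hkey
      rcases abs_cases (x j - c j - α * 1) with ⟨a1, a2⟩ | ⟨a1, a2⟩ <;>
        rcases abs_cases (x j - c j) with ⟨b1, b2⟩ | ⟨b1, b2⟩ <;> nlinarith
    refine ⟨j, 1, Or.inl rfl, ?_, ?_⟩
    · show (1 : ℝ) * (x j - c j) = ‖x - c‖
      rw [hN, abs_of_pos hpos]; ring
    · rw [h1]; norm_num
end

section
/- If s·u_i < 0 for a sign s ∈ {-1,+1}, direction u ∈ {-1,0,+1}^d, and α > 0, then the pyramid around c is contained in the pyramid around the pulled point: P^s_i(c) ⊆ P^s_i(c + αu). -/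
theorem pyramid_subset_of_pull_away {d : ℕ} (c : Fin d → ℝ) (α : ℝ) (hα : 0 < α)
    (u : Fin d → ℝ) (hu : ∀ j, u j = -1 ∨ u j = 0 ∨ u j = 1)
    (i : Fin d) (s : ℝ) (hs : s = 1 ∨ s = -1) (hsu : s * u i < 0) :
    Pyr s i c ⊆ Pyr s i (c + α • u) := by
  intro y hy
  have hs1 : |s| = 1 := by rcases hs with h|h <;> simp [h]
  have hsu' : s * u i = -1 := by
    rcases hu i with h|h|h <;> rcases hs with h'|h' <;>
      simp [h, h'] at hsu ⊢ <;> linarith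
  have hN : 0 ≤ ‖y - c‖ := norm_nonneg _
  simp only [Pyr, Set.mem_setOf_eq] at hy ⊢
  have key : ‖y - (c + α • u)‖ = ‖y - c‖ + α := by
    apply le_antisymm
    · rw [pi_norm_le_iff_of_nonneg (by linarith)]
      intro j
      have h1 : ‖(y - c) j‖ ≤ ‖y - c‖ := norm_le_pi_norm _ j
      have h2 : |u j| ≤ 1 := by rcases hu j with h|h|h <;> simp [h]
      simp only [Pi.sub_apply, Pi.add_apply, Pi.smul_apply, smul_eq_mul,
        Real.norm_eq_abs] at h1 ⊢
      have h4 := abs_sub_abs_le_abs_sub (y j - (c j + α * u j)) (y j - c j)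
      have h3 : |y j - (c j + α * u j) - (y j - c j)| = α * |u j| := by
        rw [show y j - (c j + α * u j) - (y j - c j) = -(α * u j) by ring,
          abs_neg, abs_mul, abs_of_pos hα]
      nlinarith [abs_nonneg (u j)]
    · have h1 : s * ((y - (c + α • u)) i) ≤ |(y - (c + α • u)) i| := by
        calc s * ((y - (c + α • u)) i) ≤ |s * ((y - (c + α • u)) i)| := le_abs_self _
        _ = |(y - (c + α • u)) i| := by rw [abs_mul, hs1, one_mul]
      have h2 : |(y - (c + α • u)) i| ≤ ‖y - (c + α • u)‖ := by
        simpa using norm_le_pi_norm (y - (c + α • u)) i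
      have h3 : s * ((y - (c + α • u)) i) = ‖y - c‖ + α := by
        simp only [Pi.sub_apply, Pi.add_apply, Pi.smul_apply, smul_eq_mul]
        have e : s * (y i - (c i + α * u i)) = s * (y i - c i) - α * (s * u i) := by ring
        rw [e, hy, hsu']; ring
      linarith
  rw [key]
  simp only [Pi.add_apply, Pi.smul_apply, smul_eq_mul]
  have e : s * (y i - (c i + α * u i)) = s * (y i - c i) - α * (s * u i) := by ring
  rw [e, hy, hsu']; ring
end

section
/- Let X ⊆ [0,1]^d be measurable, S ⊆ [d] nonempty, c ∈ R^d, and m ≥ 0 such that Σ_{i∈S} vol(P⁺_i(c) ∩ X) ≥ m·vol(X) and vol(P⁻_i(c) ∩ X) ≥ m·vol(X) for all i ∈ S. Then c is an m-centerpoint of X, i.e., vol(X ∩ H_v(c)) ≥ m·vol(X) for every nonzero v ∈ R^d. -/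
open MeasureTheory

/-- The ℓ∞-halfspace around `c` in direction `v`. -/
def Hsp {d : ℕ} (v c : Fin d → ℝ) : Set (Fin d → ℝ) :=
  {y | ∀ δ : ℝ, 0 < δ → ‖y - c‖ ≤ ‖y - (c - δ • v)‖}

lemma pyr_measurable {d : ℕ} (s : ℝ) (i : Fin d) (c : Fin d → ℝ) :
    MeasurableSet (Pyr s i c) := by
  have : Pyr s i c = {y : Fin d → ℝ | s * (y i - c i) - ‖y - c‖ = 0} := by
    ext y; simp [Pyr, sub_eq_zero]
  rw [this]
  exact (isClosed_eq (by fun_prop) continuous_const).measurableSet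

/-- The hyperplane `{y | y i - y j = a}` has measure zero when `i ≠ j`. -/
lemma hyperplane_null {d : ℕ} (i j : Fin d) (hij : i ≠ j) (a : ℝ) :
    volume {y : Fin d → ℝ | y i - y j = a} = 0 := by
  set f : (Fin d → ℝ) →ₗ[ℝ] ℝ := (LinearMap.proj i : (Fin d → ℝ) →ₗ[ℝ] ℝ) - LinearMap.proj j with hf
  set p : Fin d → ℝ := Pi.single i a with hp
  have hfp : f p = a := by
    simp [hf, hp, Pi.single_eq_same, Pi.single_eq_of_ne (Ne.symm hij)]
  have hker : LinearMap.ker f ≠ ⊤ := by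
    intro h
    have : f (Pi.single i 1) = 0 := by
      have : Pi.single i (1:ℝ) ∈ LinearMap.ker f := h ▸ Submodule.mem_top
      simpa using this
    simp [hf, Pi.single_eq_same, Pi.single_eq_of_ne (Ne.symm hij)] at this
  have hK : volume ((LinearMap.ker f : Submodule ℝ (Fin d → ℝ)) : Set (Fin d → ℝ)) = 0 :=
    Measure.addHaar_submodule volume _ hker
  have hset : {y : Fin d → ℝ | y i - y j = a}
      = (fun y => y - p) ⁻¹' ((LinearMap.ker f : Submodule ℝ (Fin d → ℝ)) : Set (Fin d → ℝ)) := by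
    ext y
    simp only [Set.mem_setOf_eq, Set.mem_preimage, SetLike.mem_coe, LinearMap.mem_ker, map_sub,
      hfp]
    constructor
    · intro h; simp [hf, h]
    · intro h
      have : f y = a := by linarith [h]
      simpa [hf] using this
  rw [hset]
  simpa [sub_eq_add_neg] using (by
    rw [measure_preimage_add_right volume (-p) _]; exact hK :
    volume ((fun y : Fin d → ℝ => y + (-p)) ⁻¹'
      ((LinearMap.ker f : Submodule ℝ (Fin d → ℝ)) : Set (Fin d → ℝ))) = 0)

lemma pos_pyr_subset {d : ℕ} (v c : Fin d → ℝ) (i : Fin d) (hv : 0 ≤ v i) :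
    Pyr 1 i c ⊆ Hsp v c := by
  intro y hy δ hδ
  have hy' : y i - c i = ‖y - c‖ := by simpa [Pyr] using hy
  have h1 : |(y - (c - δ • v)) i| ≤ ‖y - (c - δ • v)‖ := by
    simpa using norm_le_pi_norm (y - (c - δ • v)) i
  have h2 : y i - c i ≤ |(y - (c - δ • v)) i| := by
    have : (y - (c - δ • v)) i = y i - c i + δ * v i := by
      simp [Pi.sub_apply, Pi.smul_apply]; ring
    rw [this]
    have : y i - c i ≤ y i - c i + δ * v i := by nlinarith
    exact this.trans (le_abs_self _)
  linarith [hy' ▸ (h2.trans h1)]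

lemma neg_pyr_subset {d : ℕ} (v c : Fin d → ℝ) (i : Fin d) (hv : v i ≤ 0) :
    Pyr (-1) i c ⊆ Hsp v c := by
  intro y hy δ hδ
  have hy' : -(y i - c i) = ‖y - c‖ := by
    have := hy; simp only [Pyr, Set.mem_setOf_eq] at this; linarith [this]
  have h1 : |(y - (c - δ • v)) i| ≤ ‖y - (c - δ • v)‖ := by
    simpa using norm_le_pi_norm (y - (c - δ • v)) i
  have h2 : -(y i - c i) ≤ |(y - (c - δ • v)) i| := by
    have he : (y - (c - δ • v)) i = y i - c i + δ * v i := by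
      simp [Pi.sub_apply, Pi.smul_apply]; ring
    rw [he]
    have : -(y i - c i) ≤ -(y i - c i + δ * v i) := by nlinarith
    exact this.trans (neg_le_abs _)
  linarith [hy' ▸ (h2.trans h1)]

theorem centerpoint_from_balanced_pyramids {d : ℕ} (X : Set (Fin d → ℝ))
    (hXmeas : MeasurableSet X) (hXsub : X ⊆ Set.Icc 0 1)
    (S : Finset (Fin d)) (hS : S.Nonempty) (c : Fin d → ℝ) (m : ℝ) (hm : 0 ≤ m)
    (hpos : ENNReal.ofReal m * volume X ≤ ∑ i ∈ S, volume (Pyr 1 i c ∩ X))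
    (hneg : ∀ i ∈ S, ENNReal.ofReal m * volume X ≤ volume (Pyr (-1) i c ∩ X)) :
    ∀ v : Fin d → ℝ, v ≠ 0 → ENNReal.ofReal m * volume X ≤ volume (X ∩ Hsp v c) := by
  intro v hv
  by_cases hcase : ∃ i ∈ S, v i ≤ 0
  · obtain ⟨i, hiS, hvi⟩ := hcase
    refine (hneg i hiS).trans (measure_mono ?_)
    intro y ⟨hy1, hy2⟩
    exact ⟨hy2, neg_pyr_subset v c i hvi hy1⟩
  · push_neg at hcase
    -- all coordinates in S are positive
    have hsub : ∀ i ∈ S, Pyr 1 i c ∩ X ⊆ X ∩ Hsp v c := by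
      intro i hiS y ⟨hy1, hy2⟩
      exact ⟨hy2, pos_pyr_subset v c i (hcase i hiS).le hy1⟩
    have hAED : (S : Set (Fin d)).Pairwise
        (Function.onFun (AEDisjoint volume) (fun i => Pyr 1 i c ∩ X)) := by
      intro i _ j _ hij
      refine measure_mono_null ?_ (hyperplane_null i j hij (c i - c j))
      rintro y ⟨⟨h1, -⟩, ⟨h2, -⟩⟩
      have h1' : y i - c i = ‖y - c‖ := by simpa [Pyr] using h1
      have h2' : y j - c j = ‖y - c‖ := by simpa [Pyr] using h2
      simp only [Set.mem_setOf_eq]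
      linarith
    have hMeas : ∀ i ∈ S, NullMeasurableSet (Pyr 1 i c ∩ X) volume := fun i _ =>
      ((pyr_measurable 1 i c).inter hXmeas).nullMeasurableSet
    have hEq : ∑ i ∈ S, volume (Pyr 1 i c ∩ X) = volume (⋃ i ∈ S, Pyr 1 i c ∩ X) :=
      (measure_biUnion_finset₀ hAED hMeas).symm
    refine hpos.trans (hEq ▸ measure_mono ?_)
    exact Set.iUnion₂_subset hsub
end

section
/- Let f : [0,1]^d → [0,1]^d be λ-contracting in the ℓ∞-norm with λ < 1 and unique fixed point x* = f(x*). If c ∈ [0,1]^d satisfies ‖c - f(c)‖_∞ > ε, then the ℓ∞-ball of radius r = ε(1-λ)/(2+2λ) around x* is disjoint from the halfspace H_{c-f(c)}(c) = {y : ∀ δ > 0, ‖y - c‖_∞ ≤ ‖y - (c - δ(c - f(c)))‖_∞}. -/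
theorem ball_disjoint_from_halfspace {d : ℕ} (f : (Fin d → ℝ) → (Fin d → ℝ))
    (lam ε : ℝ) (hlam0 : 0 ≤ lam) (hlam1 : lam < 1) (hε : 0 < ε)
    (hmap : ∀ x ∈ Set.Icc (0 : Fin d → ℝ) 1, f x ∈ Set.Icc (0 : Fin d → ℝ) 1)
    (hcontr : ∀ x ∈ Set.Icc (0 : Fin d → ℝ) 1, ∀ y ∈ Set.Icc (0 : Fin d → ℝ) 1,
      ‖f x - f y‖ ≤ lam * ‖x - y‖)
    (xstar : Fin d → ℝ) (hxstar : xstar ∈ Set.Icc (0 : Fin d → ℝ) 1)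
    (hfix : f xstar = xstar)
    (c : Fin d → ℝ) (hc : c ∈ Set.Icc (0 : Fin d → ℝ) 1)
    (hfar : ε < ‖c - f c‖) :
    Metric.closedBall xstar (ε * (1 - lam) / (2 + 2 * lam)) ∩ Hsp (c - f c) c = ∅ := by
  rw [Set.eq_empty_iff_forall_notMem]
  rintro y ⟨hy1, hy2⟩
  rw [Metric.mem_closedBall, dist_eq_norm] at hy1
  have hδ1 := hy2 1 one_pos
  have hsimp : c - (1 : ℝ) • (c - f c) = f c := by simp
  rw [hsimp] at hδ1
  -- contraction between xstar and c
  have hcontr1 : ‖f xstar - f c‖ ≤ lam * ‖xstar - c‖ := hcontr xstar hxstar c hc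
  rw [hfix] at hcontr1
  have hxc : ‖xstar - c‖ = ‖c - xstar‖ := norm_sub_rev _ _
  -- A : ‖c - f c‖ ≤ (1+lam) ‖c - xstar‖
  have hA : ‖c - f c‖ ≤ ‖c - xstar‖ + ‖xstar - f c‖ := by
    have := norm_sub_le_norm_sub_add_norm_sub c xstar (f c)
    linarith [norm_add_le (c - xstar) (xstar - f c)]
  have hA' : ‖c - f c‖ ≤ (1 + lam) * ‖c - xstar‖ := by
    rw [hxc] at hcontr1; nlinarith
  -- B : lower bound on ‖y - c‖
  have hB : ‖c - xstar‖ - ‖y - xstar‖ ≤ ‖y - c‖ := by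
    have h1 : ‖c - xstar‖ ≤ ‖c - y‖ + ‖y - xstar‖ := norm_sub_le_norm_sub_add_norm_sub c y xstar
    have h2 : ‖c - y‖ = ‖y - c‖ := norm_sub_rev _ _
    linarith
  -- C : upper bound on ‖y - f c‖
  have hC : ‖y - f c‖ ≤ ‖y - xstar‖ + ‖xstar - f c‖ := norm_sub_le_norm_sub_add_norm_sub y xstar (f c)
  rw [hxc] at hcontr1
  have hr : ε * (1 - lam) / (2 + 2 * lam) = ε * (1 - lam) / (2 + 2 * lam) := rfl
  have hpos : 0 < 2 + 2 * lam := by linarith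
  have key : (1 - lam) * ‖c - xstar‖ ≤ 2 * (ε * (1 - lam) / (2 + 2 * lam)) := by
    nlinarith [hδ1, hB, hC, hy1, hcontr1]
  have hfinal : ε < ε := by
    have h2r : 2 * (ε * (1 - lam) / (2 + 2 * lam)) = ε * (1 - lam) / (1 + lam) := by
      field_simp
    rw [h2r] at key
    have h1lam : (0:ℝ) < 1 + lam := by linarith
    have : (1 - lam) * ‖c - xstar‖ * (1 + lam) ≤ ε * (1 - lam) := by
      calc (1 - lam) * ‖c - xstar‖ * (1 + lam) ≤ (ε * (1 - lam) / (1 + lam)) * (1 + lam) := by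
            nlinarith
        _ = ε * (1 - lam) := by field_simp
    nlinarith [hA', hfar]
  exact lt_irrefl _ hfinal
end

section
/- For any measurable X ⊆ [0,1]^d with positive volume, there exists a point c ∈ [0,1]^d that is a 1/2-centerpoint of X, i.e., vol(X ∩ H_v(c)) ≥ (1/2)·vol(X) for every nonzero v ∈ R^d. -/
/-!
Take for `c` a minimiser over the cube of the ℓ∞ Fermat–Weber cost `c ↦ ∫_X ‖y - c‖ dy`;
clamping coordinates into the cube brings `c` closer to every point of `X`, so `c` is a
global minimiser. If `y ∉ H_v(c)`, then every coordinate where `|y - c|` attains its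
maximum shrinks when `c` moves along `-v`; moving `c` along `-sign v` therefore brings it
closer to `y` at unit speed for a short while. Such a move changes every distance by at most
its length, so by minimality the points gaining at unit speed carry at most half of the
volume of `X`.
-/

open MeasureTheory

open Set Filter Topology

section Descent

variable {E : Type*} [NormedAddCommGroup E] [NormedSpace ℝ E]

def descentSet (c u : E) (s : ℝ) : Set E := {y | ‖y - c + s • u‖ ≤ ‖y - c‖ - s}

lemma norm_add_smul_le_sub_of_le {w u : E} {s t : ℝ} (ht : 0 ≤ t) (hts : t ≤ s)
    (h : ‖w + s • u‖ ≤ ‖w‖ - s) : ‖w + t • u‖ ≤ ‖w‖ - t := by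
  rcases (ht.trans hts).eq_or_lt with rfl | hs
  · simp [le_antisymm hts ht]
  set a := t / s
  have ha0 : 0 ≤ a := div_nonneg ht hs.le
  have ha1 : a ≤ 1 := div_le_one_of_le₀ hts hs.le
  have has : a * s = t := div_mul_cancel₀ t hs.ne'
  have hw : w + t • u = (1 - a) • w + a • (w + s • u) := by
    rw [smul_add, smul_smul, has]; module
  calc ‖w + t • u‖ ≤ (1 - a) * ‖w‖ + a * ‖w + s • u‖ := by
        rw [hw, ← norm_smul_of_nonneg (sub_nonneg.2 ha1), ← norm_smul_of_nonneg ha0]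
        exact norm_add_le _ _
    _ ≤ (1 - a) * ‖w‖ + a * (‖w‖ - s) := by gcongr
    _ = ‖w‖ - t := by linear_combination -has

lemma descentSet_subset_descentSet (c u : E) {s t : ℝ} (ht : 0 ≤ t) (hts : t ≤ s) :
    descentSet c u s ⊆ descentSet c u t :=
  fun _ hy => norm_add_smul_le_sub_of_le ht hts hy

end Descent

section DistIntegral

variable {E : Type*} [NormedAddCommGroup E] [MeasurableSpace E] [OpensMeasurableSpace E]
  {μ : Measure E} [IsFiniteMeasure μ]

noncomputable def distIntegral (μ : Measure E) (c : E) : ℝ := ∫ y, ‖y - c‖ ∂μ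

lemma integrable_norm_of_ae_mem {K : Set E} (hK : IsCompact K) (h : ∀ᵐ y ∂μ, y ∈ K) :
    Integrable (‖·‖) μ := by
  obtain ⟨C, hC⟩ := hK.isBounded.exists_norm_le
  exact .of_bound continuous_norm.aestronglyMeasurable C (h.mono fun y hy => by simpa using hC y hy)

lemma integrable_norm_sub (hμ : Integrable (‖·‖) μ) (c : E) :
    Integrable (fun y => ‖y - c‖) μ :=
  (hμ.add (integrable_const ‖c‖)).mono'
    (continuous_id.sub continuous_const).norm.aestronglyMeasurable
    (ae_of_all _ fun y => by simpa using norm_sub_le y c)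

lemma lipschitzWith_distIntegral (hμ : Integrable (‖·‖) μ) :
    LipschitzWith (μ.real univ).toNNReal (distIntegral μ) := by
  refine LipschitzWith.of_dist_le_mul fun a b => ?_
  rw [Real.coe_toNNReal _ measureReal_nonneg, Real.dist_eq, ← Real.norm_eq_abs, distIntegral,
    distIntegral, ← integral_sub (integrable_norm_sub hμ a) (integrable_norm_sub hμ b),
    mul_comm, dist_eq_norm]
  refine norm_integral_le_of_norm_le_const (ae_of_all _ fun y => ?_)
  rw [Real.norm_eq_abs, norm_sub_rev a]
  exact (abs_norm_sub_norm_le _ _).trans_eq (by rw [sub_sub_sub_cancel_left])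

variable [NormedSpace ℝ E]

lemma two_mul_measure_descentSet_le (hμ : Integrable (‖·‖) μ) {c u : E}
    (hc : ∀ z, distIntegral μ c ≤ distIntegral μ z) (hu : ‖u‖ ≤ 1) {s : ℝ}
    (hs : 0 < s) : 2 * μ (descentSet c u s) ≤ μ univ := by
  set B := descentSet c u s
  have hB : MeasurableSet B := (isClosed_le (by fun_prop) (by fun_prop)).measurableSet
  have hgain : ∀ y,
      ‖y - (c - s • u)‖ - ‖y - c‖ ≤ s - B.indicator (fun _ => 2 * s) y := by
    intro y
    rw [show y - (c - s • u) = y - c + s • u by abel]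
    by_cases hy : y ∈ B
    · rw [indicator_of_mem hy]
      linarith [show ‖y - c + s • u‖ ≤ ‖y - c‖ - s from hy]
    · rw [indicator_of_notMem hy, sub_zero]
      calc _ ≤ ‖s • u‖ := by linarith [norm_add_le (y - c) (s • u)]
        _ ≤ s := by rw [norm_smul_of_nonneg hs.le]; exact mul_le_of_le_one_right hs.le hu
  have hreal : 0 ≤ s * μ.real univ - μ.real B * (2 * s) := by
    calc 0 ≤ distIntegral μ (c - s • u) - distIntegral μ c := sub_nonneg.2 (hc _)
      _ = ∫ y, (‖y - (c - s • u)‖ - ‖y - c‖) ∂μ :=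
        (integral_sub (integrable_norm_sub hμ _) (integrable_norm_sub hμ _)).symm
      _ ≤ ∫ y, (s - B.indicator (fun _ => 2 * s) y) ∂μ :=
        integral_mono ((integrable_norm_sub hμ _).sub (integrable_norm_sub hμ _))
          ((integrable_const _).sub ((integrable_const _).indicator hB)) hgain
      _ = _ := by
        rw [integral_sub (integrable_const _) ((integrable_const _).indicator hB),
          integral_const, integral_indicator_const _ hB, smul_eq_mul, smul_eq_mul, mul_comm]
  have h2 : 2 * μ.real B ≤ μ.real univ := by nlinarith
  refine (ENNReal.toReal_le_toReal (by finiteness) (measure_ne_top _ _)).1 ?_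
  rwa [ENNReal.toReal_mul, ENNReal.toReal_ofNat, ← measureReal_def, ← measureReal_def]

end DistIntegral

lemma half_le_measure_of_two_mul_measure_compl_le {α : Type*} [MeasurableSpace α]
    {μ : Measure α} [IsFiniteMeasure μ] {s : Set α} (h : 2 * μ sᶜ ≤ μ univ) :
    μ univ / 2 ≤ μ s := by
  refine ENNReal.div_le_of_le_mul (ENNReal.le_of_add_le_add_right (measure_ne_top μ univ) ?_)
  have hcover : μ univ ≤ μ s + μ sᶜ := union_compl_self s ▸ measure_union_le s sᶜ
  calc μ univ + μ univ ≤ 2 * (μ s + μ sᶜ) := by rw [← two_mul]; gcongr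
    _ ≤ μ s * 2 + μ univ := by rw [mul_add, mul_comm]; gcongr

section Box

variable {ι : Type*}

noncomputable def projBox {a b : ι → ℝ} (hab : a ≤ b) (z : ι → ℝ) : ι → ℝ :=
  fun i => projIcc (a i) (b i) (hab i) (z i)

lemma projBox_mem {a b : ι → ℝ} (hab : a ≤ b) (z : ι → ℝ) : projBox hab z ∈ Icc a b :=
  ⟨fun i => (projIcc _ _ (hab i) (z i)).2.1, fun i => (projIcc _ _ (hab i) (z i)).2.2⟩

lemma norm_sub_projBox_le [Fintype ι] {a b y : ι → ℝ} (hab : a ≤ b) (hy : y ∈ Icc a b)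
    (z : ι → ℝ) : ‖y - projBox hab z‖ ≤ ‖y - z‖ := by
  refine (pi_norm_le_iff_of_nonneg (norm_nonneg _)).2 fun i => ?_
  have h := abs_projIcc_sub_projIcc (hab i) (c := y i) (d := z i)
  rw [projIcc_of_mem (hab i) ⟨hy.1 i, hy.2 i⟩] at h
  simpa [projBox] using h.trans (by simpa using norm_le_pi_norm (y - z) i)

end Box

section LInfinity

lemma Real.abs_sign_le_one (r : ℝ) : |Real.sign r| ≤ 1 := by
  rcases Real.sign_apply_eq r with h | h | h <;> simp [h]

lemma abs_add_mul_sign_eq {a r s : ℝ} (h : a * r < 0) (hs : s ≤ |a|) :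
    |a + s * Real.sign r| = |a| - s := by
  rcases lt_or_gt_of_ne (show r ≠ 0 by rintro rfl; simp at h) with hr | hr
  · have ha : 0 < a := by nlinarith
    rw [Real.sign_of_neg hr, abs_of_pos ha] at *
    rw [abs_of_nonneg (by linarith)]; ring
  · have ha : a < 0 := by nlinarith
    rw [Real.sign_of_pos hr, abs_of_neg ha] at *
    rw [abs_of_nonpos (by linarith)]; ring

variable {ι : Type*} [Fintype ι]

lemma mul_neg_of_abs_eq_norm {w v : ι → ℝ} {δ : ℝ} (hδ : 0 < δ)
    (h : ‖w + δ • v‖ < ‖w‖) {k : ι} (hk : |w k| = ‖w‖) : w k * v k < 0 := by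
  have hlt : |w k + δ * v k| < |w k| :=
    hk ▸ lt_of_le_of_lt (by simpa using norm_le_pi_norm (w + δ • v) k) h
  nlinarith [sq_lt_sq.2 hlt, mul_pos hδ hδ, sq_nonneg (v k)]

lemma exists_norm_add_smul_sign_le {w v : ι → ℝ} {δ : ℝ} (hδ : 0 < δ)
    (h : ‖w + δ • v‖ < ‖w‖) : ∃ s > 0, ‖w + s • (Real.sign ∘ v)‖ ≤ ‖w‖ - s := by
  have hw : 0 < ‖w‖ := (norm_nonneg _).trans_lt h
  have hle : ∀ᶠ s in 𝓝[>] (0 : ℝ), s ≤ ‖w‖ :=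
    (eventually_le_nhds hw).filter_mono nhdsWithin_le_nhds
  have hcoord : ∀ i,
      ∀ᶠ s in 𝓝[>] (0 : ℝ), |w i + s * Real.sign (v i)| ≤ ‖w‖ - s := by
    intro i
    have hwi : |w i| ≤ ‖w‖ := by simpa using norm_le_pi_norm w i
    by_cases hi : |w i| = ‖w‖
    · filter_upwards [hle] with s hs
      rw [abs_add_mul_sign_eq (mul_neg_of_abs_eq_norm hδ h hi) (hi ▸ hs), hi]
    · have hlim : Tendsto (fun s : ℝ => |w i| + 2 * s) (𝓝[>] 0) (𝓝 (|w i|)) :=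
        (Continuous.tendsto' (by fun_prop) 0 _ (by simp)).mono_left nhdsWithin_le_nhds
      filter_upwards [hlim.eventually_lt_const (hwi.lt_of_ne hi), self_mem_nhdsWithin]
        with s hs hs0
      calc |w i + s * Real.sign (v i)| ≤ |w i| + s * |Real.sign (v i)| := by
            simpa [abs_mul, abs_of_pos (mem_Ioi.1 hs0)] using abs_add_le (w i) (s * Real.sign (v i))
        _ ≤ ‖w‖ - s := by nlinarith [mem_Ioi.1 hs0, Real.abs_sign_le_one (v i)]
  obtain ⟨s, hs, hsw, hs_coord⟩ :=
    (eventually_mem_nhdsWithin.and (hle.and (eventually_all.2 hcoord))).exists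
  exact ⟨s, hs, (pi_norm_le_iff_of_nonneg (by linarith)).2 fun i => by simpa using hs_coord i⟩

variable [MeasurableSpace (ι → ℝ)] [OpensMeasurableSpace (ι → ℝ)]
  {μ : Measure (ι → ℝ)} [IsFiniteMeasure μ]

lemma exists_mem_Icc_forall_distIntegral_le {a b : ι → ℝ} (hab : a ≤ b)
    (hμ : ∀ᵐ y ∂μ, y ∈ Icc a b) :
    ∃ c ∈ Icc a b, ∀ z, distIntegral μ c ≤ distIntegral μ z := by
  have hint := integrable_norm_of_ae_mem isCompact_Icc hμ
  obtain ⟨c, hc, hmin⟩ := isCompact_Icc.exists_isMinOn (nonempty_Icc.2 hab)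
    (lipschitzWith_distIntegral hint).continuous.continuousOn
  refine ⟨c, hc, fun z => (hmin (projBox_mem hab z)).trans ?_⟩
  exact integral_mono_ae (integrable_norm_sub hint _) (integrable_norm_sub hint _)
    (hμ.mono fun y hy => norm_sub_projBox_le hab hy z)

end LInfinity

section Halfspace

variable {d : ℕ}

lemma isClosed_Hsp (v c : Fin d → ℝ) : IsClosed (Hsp v c) := by
  simp only [Hsp, ofPred_forall]
  exact isClosed_iInter fun δ => isClosed_iInter fun _ => isClosed_le (by fun_prop) (by fun_prop)

lemma compl_Hsp_subset_iUnion_descentSet (v c : Fin d → ℝ) :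
    (Hsp v c)ᶜ ⊆ ⋃ n : ℕ, descentSet c (Real.sign ∘ v) (1 / (n + 1)) := by
  intro y hy
  simp only [Hsp, mem_compl_iff, mem_ofPred_eq, not_forall, not_le] at hy
  obtain ⟨δ, hδ, hlt⟩ := hy
  rw [show y - (c - δ • v) = y - c + δ • v by abel] at hlt
  obtain ⟨s, hs, hdesc⟩ := exists_norm_add_smul_sign_le hδ hlt
  obtain ⟨n, hn⟩ := exists_nat_one_div_lt hs
  exact mem_iUnion.2 ⟨n, norm_add_smul_le_sub_of_le (by positivity) hn.le hdesc⟩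

lemma two_mul_measure_compl_Hsp_le {μ : Measure (Fin d → ℝ)} [IsFiniteMeasure μ]
    (hμ : Integrable (‖·‖) μ) {c : Fin d → ℝ}
    (hc : ∀ z, distIntegral μ c ≤ distIntegral μ z) (v : Fin d → ℝ) :
    2 * μ (Hsp v c)ᶜ ≤ μ univ := by
  set u : Fin d → ℝ := Real.sign ∘ v
  have hu : ‖u‖ ≤ 1 := (pi_norm_le_iff_of_nonneg zero_le_one).2 fun i => by
    simpa [u] using Real.abs_sign_le_one (v i)
  have hmono : Monotone fun n : ℕ => descentSet c u (1 / (n + 1)) := fun m n hmn =>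
    descentSet_subset_descentSet c u (by positivity) (Nat.one_div_le_one_div hmn)
  calc 2 * μ (Hsp v c)ᶜ ≤ 2 * μ (⋃ n : ℕ, descentSet c u (1 / (n + 1))) := by
        gcongr; exact compl_Hsp_subset_iUnion_descentSet v c
    _ = ⨆ n : ℕ, 2 * μ (descentSet c u (1 / (n + 1))) := by
        rw [hmono.measure_iUnion, ENNReal.mul_iSup]
    _ ≤ μ univ := iSup_le fun n => two_mul_measure_descentSet_le hμ hc hu (by positivity)

end Halfspace

theorem centerpoint_exists_general {d : ℕ} (X : Set (Fin d → ℝ))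
    (hXsub : X ⊆ Set.Icc 0 1) :
    ∃ c ∈ Set.Icc (0 : Fin d → ℝ) 1,
      ∀ v : Fin d → ℝ, v ≠ 0 → volume X / 2 ≤ volume (X ∩ Hsp v c) := by
  have : IsFiniteMeasure (volume.restrict X) :=
    isFiniteMeasure_restrict.2 ((measure_mono hXsub).trans_lt isCompact_Icc.measure_lt_top).ne
  have hsupp : ∀ᵐ y ∂volume.restrict X, y ∈ Icc (0 : Fin d → ℝ) 1 :=
    ae_restrict_of_ae_restrict_of_subset hXsub (ae_restrict_mem measurableSet_Icc)
  obtain ⟨c, hc, hmin⟩ := exists_mem_Icc_forall_distIntegral_le zero_le_one hsupp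
  refine ⟨c, hc, fun v _ => ?_⟩
  have := half_le_measure_of_two_mul_measure_compl_le
    (two_mul_measure_compl_Hsp_le (integrable_norm_of_ae_mem isCompact_Icc hsupp) hmin v)
  rwa [Measure.restrict_apply_univ, Measure.restrict_apply (isClosed_Hsp v c).measurableSet,
    inter_comm] at this

theorem centerpoint_exists {d : ℕ} (X : Set (Fin d → ℝ))
    (hXmeas : MeasurableSet X) (hXsub : X ⊆ Set.Icc 0 1) (hXpos : 0 < volume X) :
    ∃ c ∈ Set.Icc (0 : Fin d → ℝ) 1,
      ∀ v : Fin d → ℝ, v ≠ 0 → volume X / 2 ≤ volume (X ∩ Hsp v c) :=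
  centerpoint_exists_general X hXsub
end
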